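/- Let (K, t, c, λ) be a weak mixed distributive law in Cat, with splitting (a, π, σ) of the canonical idempotent on tc, set α = π ∘ (μ c) ∘ (t σ), η₁ = π ∘ (η ▷ c) : c ⟶ a, and ε₁ = (t ◁ ε) ∘ σ : a ⟶ t. Then ε₁ ∘ α ∘ (t ◁ η₁) = (ε ▷ t) ∘ λ (third diagram of the key Lemma of Böhm–Lack–Street). -/

import Mathlib

/-! Rewriting `π ≫ σ` as the idempotent `Θ`, the left-hand side becomes
`t η ≫ t Θ ≫ μ ≫ Θ ≫ t ε`. The weak counit axiom absorbs `t η ≫ t Θ ≫ μ` into `Θ`,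
idempotence (from `σ ≫ π = 1`) collapses `Θ ≫ Θ`, and the counit law of `c` turns
`Θ ≫ t ε` into `λ ≫ ε t`. -/

open CategoryTheory

universe v₁ u₁ v₂ u₂

variable {K : Type u₁} [Category.{v₁} K]

/-- A weak mixed distributive law `λ : tc ⟶ ct` between a monad `t` and a comonad `c`
on a category `K`, satisfying the four axioms of Böhm–Lack–Street, stated componentwise. -/
structure WeakMixedDistLaw (t : CategoryTheory.Monad K) (c : CategoryTheory.Comonad K) where
  l : (c.toFunctor ⋙ t.toFunctor) ⟶ (t.toFunctor ⋙ c.toFunctor)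
  mul_compat : ∀ X : K, t.μ.app (c.obj X) ≫ l.app X =
    t.map (l.app X) ≫ l.app (t.obj X) ≫ c.map (t.μ.app X)
  comul_compat : ∀ X : K, t.map (c.δ.app X) ≫ l.app (c.obj X) ≫ c.map (l.app X) =
    l.app X ≫ c.δ.app (t.obj X)
  weak_unit : ∀ X : K, t.η.app (c.obj X) ≫ l.app X =
    c.δ.app X ≫ c.map (t.η.app (c.obj X)) ≫ c.map (l.app X) ≫ c.map (c.ε.app (t.obj X))
  weak_counit : ∀ X : K, l.app X ≫ c.ε.app (t.obj X) =
    t.map (t.η.app (c.obj X)) ≫ t.map (l.app X) ≫ t.map (c.ε.app (t.obj X)) ≫ t.μ.app X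

namespace WeakMixedDistLaw

variable {t : CategoryTheory.Monad K} {c : CategoryTheory.Comonad K} (W : WeakMixedDistLaw t c)

/-- The canonical idempotent `Θ = (ε t c) ∘ (λ c) ∘ (t δ)` on `tc`. -/
def idem (X : K) : t.obj (c.obj X) ⟶ t.obj (c.obj X) :=
  t.map (c.δ.app X) ≫ W.l.app (c.obj X) ≫ c.ε.app (t.obj (c.obj X))

lemma idem_comp_map_counit (X : K) :
    W.idem X ≫ t.map (c.ε.app X) = W.l.app X ≫ c.ε.app (t.obj X) := by
  have hl : t.map (c.map (c.ε.app X)) ≫ W.l.app X =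
      W.l.app (c.obj X) ≫ c.map (t.map (c.ε.app X)) := W.l.naturality (c.ε.app X)
  have hε : c.ε.app (t.obj (c.obj X)) ≫ t.map (c.ε.app X) =
      c.map (t.map (c.ε.app X)) ≫ c.ε.app (t.obj X) := (c.ε.naturality _).symm
  rw [idem, Category.assoc, Category.assoc, hε, ← reassoc_of% hl, ← Functor.map_comp_assoc,
    c.right_counit, CategoryTheory.Functor.map_id, Category.id_comp]

lemma map_unit_comp_map_idem_comp_mu (X : K) :
    t.map (t.η.app (c.obj X)) ≫ t.map (W.idem X) ≫ t.μ.app (c.obj X) = W.idem X := by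
  have hη : t.η.app (c.obj X) ≫ t.map (c.δ.app X) =
      c.δ.app X ≫ t.η.app (c.obj (c.obj X)) := (t.η.naturality (c.δ.app X)).symm
  simp only [idem, Functor.map_comp, Category.assoc]
  rw [← Functor.map_comp_assoc, hη, Functor.map_comp_assoc, ← W.weak_counit]

end WeakMixedDistLaw

/-- Third diagram of the key Lemma: ε₁ ∘ α ∘ (t η₁) = (ε t) ∘ λ,
where η₁ = π ∘ (η c) and ε₁ = (t ε) ∘ σ. -/
theorem eps_one_linear (t : CategoryTheory.Monad K) (c : CategoryTheory.Comonad K)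
    (W : WeakMixedDistLaw t c) (a : K ⥤ K) (π : (c.toFunctor ⋙ t.toFunctor) ⟶ a) (σ : a ⟶ (c.toFunctor ⋙ t.toFunctor))
    (hsec : σ ≫ π = 𝟙 a)
    (hsplit : ∀ X : K, π.app X ≫ σ.app X =
      t.map (c.δ.app X) ≫ W.l.app (c.obj X) ≫ c.ε.app (t.obj (c.obj X))) :
    ∀ X : K,
      t.map (t.η.app (c.obj X) ≫ π.app X) ≫
        (t.map (σ.app X) ≫ t.μ.app (c.obj X) ≫ π.app X) ≫
        (σ.app X ≫ t.map (c.ε.app X)) =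
      W.l.app X ≫ c.ε.app (t.obj X) := by
  intro X
  have hsec_X : σ.app X ≫ π.app X = 𝟙 _ := by simpa using congrArg (·.app X) hsec
  have hsplit_X : π.app X ≫ σ.app X = W.idem X := hsplit X
  calc _ = (t.map (t.η.app (c.obj X)) ≫ t.map (π.app X ≫ σ.app X) ≫ t.μ.app (c.obj X)) ≫
        π.app X ≫ σ.app X ≫ t.map (c.ε.app X) := by simp only [Functor.map_comp, Category.assoc]
    _ = π.app X ≫ (σ.app X ≫ π.app X) ≫ σ.app X ≫ t.map (c.ε.app X) := by
        rw [hsplit_X, W.map_unit_comp_map_idem_comp_mu, ← hsplit_X]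
        simp only [Category.assoc]
    _ = W.l.app X ≫ c.ε.app (t.obj X) := by
        rw [hsec_X, Category.id_comp, ← Category.assoc, hsplit_X]
        exact W.idem_comp_map_counit X
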